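/- arXiv:1511.02510 — 2 statements merged into one kernel-verified Lean document; each statement's English description precedes it below -/
import Mathlib

section
/- Let $a > 0$, $p > 1$, $F_0 > 0$, $T \in (0,\infty]$, and let $g : [0,T) \to \mathbb{R}$ be continuous with $g(t) \ge F_0$ for all $t$. Suppose $u : [0,T) \to (0,\infty)$ is differentiable and satisfies $u'(t) = -a\,u(t) + u(t)^p g(t)$ for all $t \in [0,T)$. Then for every $t \in [0,T)$ one has $u(0)^{1-p} - \big(1 - e^{(1-p)at}\big)a^{-1}F_0 > 0$ and the lower bound $u(t) \ge e^{-at}\Big(u(0)^{1-p} - \big(1 - e^{(1-p)at}\big)a^{-1}F_0\Big)^{-\frac{1}{p-1}}$. -/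
/-!
The substitution `w = u ^ (1 - p)` turns the Bernoulli equation into the linear equation
`w' = (p - 1) a w - (p - 1) g`, so `g ≥ F₀` gives the linear differential inequality
`w' ≤ (p - 1) a (w - F₀ / a)`. Its integrating factor makes `e^{(1-p) a s} (w s - F₀ / a)`
nonincreasing, which bounds `e^{(1-p) a t} u(t)^{1-p}` by the bracket `B` of the statement;
in particular `B > 0`, and raising to the negative power `-1/(p-1)` inverts the inequality.
-/

open Real Set
open scoped ENNReal

theorem antitoneOn_exp_mul_sub_of_hasDerivAt_le {D : Set ℝ} (hD : Convex ℝ D)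
    {w w' : ℝ → ℝ} {k c : ℝ} (hw : ∀ s ∈ D, HasDerivAt w (w' s) s)
    (hle : ∀ s ∈ D, w' s ≤ k * (w s - c)) :
    AntitoneOn (fun s => exp (-k * s) * (w s - c)) D := by
  have hderiv : ∀ s ∈ D, HasDerivAt (fun s => exp (-k * s) * (w s - c))
      (exp (-k * s) * (w' s - k * (w s - c))) s := by
    intro s hs
    have hexp : HasDerivAt (fun s => exp (-k * s)) (exp (-k * s) * -k) s := by
      simpa using ((hasDerivAt_id s).const_mul (-k)).exp
    exact (hexp.mul ((hw s hs).sub_const c)).congr_deriv (by ring)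
  refine antitoneOn_of_hasDerivWithinAt_nonpos hD
    (fun s hs => (hderiv s hs).continuousAt.continuousWithinAt)
    (fun s hs => (hderiv s (interior_subset hs)).hasDerivWithinAt) fun s hs => ?_
  exact mul_nonpos_of_nonneg_of_nonpos (exp_pos _).le
    (sub_nonpos.2 (hle s (interior_subset hs)))

theorem HasDerivAt.rpow_one_sub_of_bernoulli {u : ℝ → ℝ} {a p g t : ℝ}
    (hu : HasDerivAt u (-a * u t + u t ^ p * g) t) (hpos : 0 < u t) :
    HasDerivAt (fun s => u s ^ (1 - p)) ((1 - p) * (-a * u t ^ (1 - p) + g)) t := by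
  convert hu.rpow_const (p := 1 - p) (Or.inl hpos.ne') using 1
  have hlin : u t * u t ^ (-p) = u t ^ (1 - p) := by
    rw [sub_eq_add_neg, rpow_add hpos, rpow_one]
  have hcancel : u t ^ p * u t ^ (-p) = 1 := by
    rw [← rpow_add hpos, add_neg_cancel, rpow_zero]
  rw [show 1 - p - 1 = -p by ring]
  linear_combination (1 - p) * a * hlin - (1 - p) * g * hcancel

theorem exp_neg_mul_rpow_le_of_exp_mul_rpow_one_sub_le {x B a p t : ℝ} (hx : 0 < x)
    (hB : 0 < B) (hp : 1 < p) (h : exp ((1 - p) * a * t) * x ^ (1 - p) ≤ B) :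
    exp (-a * t) * B ^ (-(1 / (p - 1))) ≤ x := by
  have hy : 0 < exp (a * t) * x := by positivity
  have hpow : (exp (a * t) * x) ^ (1 - p) = exp ((1 - p) * a * t) * x ^ (1 - p) := by
    rw [mul_rpow (exp_pos _).le hx.le, ← exp_mul]
    ring_nf
  have hinv : B ^ (1 - p)⁻¹ ≤ exp (a * t) * x :=
    (rpow_inv_le_iff_of_neg hB hy (by linarith)).2 (hpow ▸ h)
  rw [show -(1 / (p - 1)) = (1 - p)⁻¹ by rw [one_div, ← inv_neg, neg_sub]]
  calc exp (-a * t) * B ^ (1 - p)⁻¹ ≤ exp (-a * t) * (exp (a * t) * x) := by gcongr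
    _ = x := by rw [← mul_assoc, ← exp_add, neg_mul, neg_add_cancel, exp_zero, one_mul]

theorem bernoulli_lower_bound_general
    (a p F₀ : ℝ) (ha : 0 < a) (hp : 1 < p)
    (T : ℝ≥0∞)
    (g : ℝ → ℝ)
    (hg_lb : ∀ t : ℝ, 0 ≤ t → ENNReal.ofReal t < T → F₀ ≤ g t)
    (u u' : ℝ → ℝ)
    (hupos : ∀ t : ℝ, 0 ≤ t → ENNReal.ofReal t < T → 0 < u t)
    (hderiv : ∀ t : ℝ, 0 ≤ t → ENNReal.ofReal t < T → HasDerivAt u (u' t) t)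
    (heq : ∀ t : ℝ, 0 ≤ t → ENNReal.ofReal t < T →
      u' t = -a * u t + u t ^ p * g t) :
    ∀ t : ℝ, 0 ≤ t → ENNReal.ofReal t < T →
      0 < u 0 ^ (1 - p) - (1 - Real.exp ((1 - p) * a * t)) * a⁻¹ * F₀ ∧
      u t ≥ Real.exp (-a * t) *
        (u 0 ^ (1 - p) - (1 - Real.exp ((1 - p) * a * t)) * a⁻¹ * F₀)
          ^ (-(1 / (p - 1))) := by
  intro t ht htT
  have hdom : ∀ s ∈ Icc 0 t, 0 ≤ s ∧ ENNReal.ofReal s < T := fun s hs =>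
    ⟨hs.1, (ENNReal.ofReal_le_ofReal hs.2).trans_lt htT⟩
  have hw : ∀ s ∈ Icc 0 t, HasDerivAt (fun s => u s ^ (1 - p))
      ((1 - p) * (-a * u s ^ (1 - p) + g s)) s := fun s hs => by
    obtain ⟨hs0, hsT⟩ := hdom s hs
    exact (heq s hs0 hsT ▸ hderiv s hs0 hsT).rpow_one_sub_of_bernoulli (hupos s hs0 hsT)
  have hle : ∀ s ∈ Icc 0 t, (1 - p) * (-a * u s ^ (1 - p) + g s) ≤
      (p - 1) * a * (u s ^ (1 - p) - a⁻¹ * F₀) := fun s hs => by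
    have hF := hg_lb s (hdom s hs).1 (hdom s hs).2
    rw [mul_sub, show (p - 1) * a * (a⁻¹ * F₀) = (p - 1) * F₀ by field_simp]
    nlinarith
  have hmono := antitoneOn_exp_mul_sub_of_hasDerivAt_le (convex_Icc 0 t) hw hle
    (left_mem_Icc.2 ht) (right_mem_Icc.2 ht) ht
  simp only [mul_zero, exp_zero, one_mul, show -((p - 1) * a) * t = (1 - p) * a * t by ring]
    at hmono
  have hbound : exp ((1 - p) * a * t) * u t ^ (1 - p) ≤
      u 0 ^ (1 - p) - (1 - exp ((1 - p) * a * t)) * a⁻¹ * F₀ := by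
    linear_combination hmono
  have hut := hupos t ht htT
  have hB := (by positivity : 0 < exp ((1 - p) * a * t) * u t ^ (1 - p)).trans_le hbound
  exact ⟨hB, exp_neg_mul_rpow_le_of_exp_mul_rpow_one_sub_le hut hB hp hbound⟩

/-- Lower bound for positive solutions of `u' = -a u + u^p g(t)` when `g ≥ F₀ > 0`. -/
theorem bernoulli_lower_bound
    (a p F₀ : ℝ) (ha : 0 < a) (hp : 1 < p) (hF₀ : 0 < F₀)
    (T : ℝ≥0∞) (hT : 0 < T)
    (g : ℝ → ℝ)
    (hg_cont : ContinuousOn g {t : ℝ | 0 ≤ t ∧ ENNReal.ofReal t < T})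
    (hg_lb : ∀ t : ℝ, 0 ≤ t → ENNReal.ofReal t < T → F₀ ≤ g t)
    (u u' : ℝ → ℝ)
    (hupos : ∀ t : ℝ, 0 ≤ t → ENNReal.ofReal t < T → 0 < u t)
    (hderiv : ∀ t : ℝ, 0 ≤ t → ENNReal.ofReal t < T → HasDerivAt u (u' t) t)
    (heq : ∀ t : ℝ, 0 ≤ t → ENNReal.ofReal t < T →
      u' t = -a * u t + u t ^ p * g t) :
    ∀ t : ℝ, 0 ≤ t → ENNReal.ofReal t < T →
      0 < u 0 ^ (1 - p) - (1 - Real.exp ((1 - p) * a * t)) * a⁻¹ * F₀ ∧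
      u t ≥ Real.exp (-a * t) *
        (u 0 ^ (1 - p) - (1 - Real.exp ((1 - p) * a * t)) * a⁻¹ * F₀)
          ^ (-(1 / (p - 1))) :=
  bernoulli_lower_bound_general a p F₀ ha hp T g hg_lb u u' hupos hderiv heq
end

section
/- Let $a > 0$, $p > 1$, $F_0 > 0$, $T \in (0,\infty]$, and let $g : [0,T) \to \mathbb{R}$ be continuous with $g(t) \ge F_0$ for all $t \in [0,T)$. Suppose $u : [0,T) \to (0,\infty)$ is differentiable and satisfies $u'(t) = -a\,u(t) + u(t)^p g(t)$ for all $t \in [0,T)$, and assume the initial value satisfies $u(0) \ge \Big(\frac{a}{\big(1 - e^{(1-p)a}\big)F_0}\Big)^{\frac{1}{p-1}}$. Then $T \le 1$; that is, no such positive solution can exist on an interval of length greater than $1$. -/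
open Real
open scoped ENNReal

/-- Blow-up before time 1: no positive solution of `u' = -a u + u^p g(t)` with
`g ≥ F₀ > 0` and large initial datum can exist on an interval of length `> 1`. -/
theorem blowup_before_time_one
    (a p F₀ : ℝ) (ha : 0 < a) (hp : 1 < p) (hF₀ : 0 < F₀)
    (T : ℝ≥0∞) (hT : 0 < T)
    (g : ℝ → ℝ)
    (hg_cont : ContinuousOn g {t : ℝ | 0 ≤ t ∧ ENNReal.ofReal t < T})
    (hg_lb : ∀ t : ℝ, 0 ≤ t → ENNReal.ofReal t < T → F₀ ≤ g t)
    (u u' : ℝ → ℝ)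
    (hupos : ∀ t : ℝ, 0 ≤ t → ENNReal.ofReal t < T → 0 < u t)
    (hderiv : ∀ t : ℝ, 0 ≤ t → ENNReal.ofReal t < T → HasDerivAt u (u' t) t)
    (heq : ∀ t : ℝ, 0 ≤ t → ENNReal.ofReal t < T →
      u' t = -a * u t + u t ^ p * g t)
    (hu0 : u 0 ≥ (a / ((1 - Real.exp ((1 - p) * a)) * F₀)) ^ (1 / (p - 1))) :
    T ≤ 1 := by
  by_contra hT1
  push_neg at hT1
  have ha' : a ≠ 0 := ne_of_gt ha
  set G : ℝ → ℝ := fun t => Real.exp ((1 - p) * a * t) * (u t ^ (1 - p) - F₀ / a) with hGdef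
  have hmem : ∀ t ∈ Set.Icc (0:ℝ) 1, 0 ≤ t ∧ ENNReal.ofReal t < T := by
    intro t ht
    refine ⟨ht.1, lt_of_le_of_lt ?_ hT1⟩
    calc ENNReal.ofReal t ≤ ENNReal.ofReal 1 := ENNReal.ofReal_le_ofReal ht.2
    _ = 1 := ENNReal.ofReal_one
  have hGd : ∀ t : ℝ, 0 ≤ t → ENNReal.ofReal t < T →
      HasDerivAt G (Real.exp ((1 - p) * a * t) * ((p - 1) * (F₀ - g t))) t := by
    intro t ht0 htT
    have hU : 0 < u t := hupos t ht0 htT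
    have hu := hderiv t ht0 htT
    have hz : HasDerivAt (fun s => u s ^ (1 - p)) (u' t * (1 - p) * u t ^ (1 - p - 1)) t :=
      hu.rpow_const (Or.inl hU.ne')
    have hexp : HasDerivAt (fun s => Real.exp ((1 - p) * a * s))
        (Real.exp ((1 - p) * a * t) * ((1 - p) * a)) t := by
      simpa [mul_comm] using (((hasDerivAt_id t).const_mul ((1 - p) * a)).exp)
    have hG : HasDerivAt G
        (Real.exp ((1 - p) * a * t) * ((1 - p) * a) * (u t ^ (1 - p) - F₀ / a)
          + Real.exp ((1 - p) * a * t) * (u' t * (1 - p) * u t ^ (1 - p - 1))) t :=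
      hexp.mul (hz.sub_const _)
    convert hG using 1
    have h1 : u t ^ (1 - p) = u t * u t ^ (1 - p - 1) := by
      have h := Real.rpow_add hU 1 (1 - p - 1)
      rw [Real.rpow_one, show (1 : ℝ) + (1 - p - 1) = 1 - p by ring] at h
      exact h
    have h2 : u t ^ p * u t ^ (1 - p - 1) = 1 := by
      rw [← Real.rpow_add hU, show (p + (1 - p - 1) : ℝ) = 0 by ring, Real.rpow_zero]
    have hexpand : u' t * (1 - p) * u t ^ (1 - p - 1)
        = (1 - p) * (-a * u t ^ (1 - p) + g t) := by
      rw [heq t ht0 htT, show ((-a * u t + u t ^ p * g t) * (1 - p) * u t ^ (1 - p - 1) : ℝ)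
        = (1 - p) * (-a * (u t * u t ^ (1 - p - 1)) + g t * (u t ^ p * u t ^ (1 - p - 1))) by ring,
        h2, ← h1]
      ring
    rw [hexpand]
    field_simp
    ring
  have hcont : ContinuousOn G (Set.Icc 0 1) := fun t ht =>
    ((hGd t (hmem t ht).1 (hmem t ht).2).continuousAt).continuousWithinAt
  have hanti : AntitoneOn G (Set.Icc 0 1) := by
    refine antitoneOn_of_deriv_nonpos (convex_Icc 0 1) hcont ?_ ?_
    · intro x hx
      rw [interior_Icc] at hx
      obtain ⟨h0, h2⟩ := hmem x ⟨hx.1.le, hx.2.le⟩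
      exact ((hGd x h0 h2).differentiableAt).differentiableWithinAt
    intro x hx
    rw [interior_Icc] at hx
    obtain ⟨h0, h2⟩ := hmem x ⟨hx.1.le, hx.2.le⟩
    rw [(hGd x h0 h2).deriv]
    have hgx := hg_lb x h0 h2
    have hE := Real.exp_pos ((1 - p) * a * x)
    nlinarith [mul_nonneg hE.le (mul_nonneg (by linarith : (0:ℝ) ≤ p - 1)
      (by linarith : (0:ℝ) ≤ g x - F₀))]
  have hG10 : G 1 ≤ G 0 :=
    hanti (Set.left_mem_Icc.mpr zero_le_one) (Set.right_mem_Icc.mpr zero_le_one) zero_le_one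
  obtain ⟨h00, h0T⟩ := hmem 0 (Set.left_mem_Icc.mpr zero_le_one)
  obtain ⟨h10, h1T⟩ := hmem 1 (Set.right_mem_Icc.mpr zero_le_one)
  have hu0p := hupos 0 h00 h0T
  have hu1p := hupos 1 h10 h1T
  have heP : 0 < Real.exp ((1 - p) * a) := Real.exp_pos _
  have he1 : Real.exp ((1 - p) * a) < 1 := by
    rw [Real.exp_lt_one_iff]
    nlinarith
  have hden : 0 < (1 - Real.exp ((1 - p) * a)) * F₀ := mul_pos (by linarith) hF₀
  have hM : 0 < a / ((1 - Real.exp ((1 - p) * a)) * F₀) := div_pos ha hden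
  have hu0pow : a / ((1 - Real.exp ((1 - p) * a)) * F₀) ≤ u 0 ^ (p - 1) := by
    have h := Real.rpow_le_rpow (Real.rpow_nonneg hM.le _) hu0 (by linarith : (0:ℝ) ≤ p - 1)
    rwa [← Real.rpow_mul hM.le, one_div, inv_mul_cancel₀ (by linarith : p - 1 ≠ 0),
      Real.rpow_one] at h
  have hinv : u 0 ^ (1 - p) ≤ (1 - Real.exp ((1 - p) * a)) * F₀ / a := by
    have hrw : u 0 ^ (1 - p) = (u 0 ^ (p - 1))⁻¹ := by
      rw [← Real.rpow_neg hu0p.le, neg_sub]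
    rw [hrw]
    calc (u 0 ^ (p - 1))⁻¹ ≤ (a / ((1 - Real.exp ((1 - p) * a)) * F₀))⁻¹ :=
          inv_anti₀ hM hu0pow
    _ = (1 - Real.exp ((1 - p) * a)) * F₀ / a := by rw [inv_div]
  have hu1q : 0 < u 1 ^ (1 - p) := Real.rpow_pos_of_pos hu1p _
  have hG0 : G 0 = u 0 ^ (1 - p) - F₀ / a := by simp [hGdef]
  have hG1 : G 1 = Real.exp ((1 - p) * a) * (u 1 ^ (1 - p) - F₀ / a) := by simp [hGdef]
  rw [hG0, hG1] at hG10
  have expand : (1 - Real.exp ((1 - p) * a)) * F₀ / a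
      = F₀ / a - Real.exp ((1 - p) * a) * (F₀ / a) := by ring
  rw [expand] at hinv
  nlinarith [mul_pos heP hu1q, hG10, hinv]
end
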